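/- Let n ≥ 1, let ℓ be a positive integer, and let K ⊂ ℝⁿ be a compact convex set with K = -K and B(0, δ₁) ⊂ K ⊂ B(0, δ₂) for some 0 < δ₁ ≤ δ₂. Define I_K := |K|^{-1} χ_K, m_{ℓ,K}(x) := -(2/C(2ℓ,ℓ)) ∑_{j=1}^{ℓ} (-1)^j C(2ℓ, ℓ-j) Î_K(jx), and A_{ℓ,K}(x) := (4^ℓ/C(2ℓ,ℓ)) (1/|K|) ∫_K (sin((x·u)/2))^{2ℓ} du. Then m_{ℓ,K}(x) = 1 - A_{ℓ,K}(x) for all x ∈ ℝⁿ, and there exist positive constants C₁ and C₂, depending only on n, ℓ, δ₁, δ₂, such that C₁ |x|^{2ℓ} ≤ A_{ℓ,K}(x) ≤ C₂ |x|^{2ℓ} for all x ∈ ℝⁿ with |x| ≤ 4. -/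

import Mathlib

open MeasureTheory Metric Finset

/-- The Fourier transform `f̂(ξ) = ∫ f(x) e^{-i x·ξ} dx`. -/
noncomputable def FT {n : ℕ} (f : EuclideanSpace ℝ (Fin n) → ℂ)
    (ξ : EuclideanSpace ℝ (Fin n)) : ℂ :=
  ∫ x, Complex.exp (-(Complex.I * ((inner ℝ x ξ : ℝ) : ℂ))) * f x

/-- `I_K := |K|⁻¹ χ_K`, the normalized indicator of `K`. -/
noncomputable def indK {n : ℕ} (K : Set (EuclideanSpace ℝ (Fin n))) :
    EuclideanSpace ℝ (Fin n) → ℂ :=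
  K.indicator (fun _ => (((volume K).toReal : ℂ))⁻¹)

/-- `m_{ℓ,K}(x) := -(2/C(2ℓ,ℓ)) ∑_{j=1}^{ℓ} (-1)^j C(2ℓ,ℓ-j) Î_K(jx)`. -/
noncomputable def mK {n : ℕ} (ℓ : ℕ) (K : Set (EuclideanSpace ℝ (Fin n)))
    (x : EuclideanSpace ℝ (Fin n)) : ℂ :=
  -(2 / ((2 * ℓ).choose ℓ : ℂ)) *
    ∑ j ∈ Finset.Icc 1 ℓ, (-1 : ℂ) ^ j * ((2 * ℓ).choose (ℓ - j) : ℂ) * FT (indK K) ((j : ℝ) • x)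

/-- `A_{ℓ,K}(x) := (4^ℓ/C(2ℓ,ℓ)) (1/|K|) ∫_K (sin((x·u)/2))^{2ℓ} du`. -/
noncomputable def AK {n : ℕ} (ℓ : ℕ) (K : Set (EuclideanSpace ℝ (Fin n)))
    (x : EuclideanSpace ℝ (Fin n)) : ℝ :=
  ((4 : ℝ) ^ ℓ / ((2 * ℓ).choose ℓ : ℝ)) * ((volume K).toReal)⁻¹ *
    ∫ u in K, Real.sin ((inner ℝ x u : ℝ) / 2) ^ (2 * ℓ)

/-!
Expanding `(2 sin θ)^{2ℓ} = ((e^{-iθ} - e^{iθ}) i)^{2ℓ}` binomially and pairing the terms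
`k = ℓ ± j` gives the power-reduction formula
`(2 sin θ)^{2ℓ} = C(2ℓ,ℓ) + 2 ∑_{j=1}^{ℓ} (-1)^j C(2ℓ,ℓ-j) cos (2jθ)`.
Since `K = -K`, the Fourier transform of `I_K` is the cosine integral `|K|⁻¹ ∫_K cos (u·ξ) du`,
so integrating the formula at `θ = x·u/2` over `K` gives `m_{ℓ,K} = 1 - A_{ℓ,K}`.

For the bounds, `|2 sin (t/2)| ≤ |t| ≤ δ₂ |x|` on `K` gives the upper one. For the lower one, with
`r = min δ₁ (1/2)`, every `u` in the ball of radius `r/4` around `(r/2) x/|x|` lies in `K` and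
satisfies `r|x|/4 ≤ x·u ≤ π`, where Jordan's inequality `sin s ≥ 2s/π` applies.
-/

open Real

lemma Finset.sum_range_two_mul_add_one_eq_add_sum_Icc {M : Type*} [AddCommMonoid M]
    (ℓ : ℕ) (f : ℕ → M) :
    ∑ k ∈ range (2 * ℓ + 1), f k = f ℓ + ∑ j ∈ Icc 1 ℓ, (f (ℓ - j) + f (ℓ + j)) := by
  induction ℓ generalizing f with
  | zero => simp
  | succ m ih =>
    rw [show 2 * (m + 1) + 1 = 2 * m + 1 + 1 + 1 by ring, sum_range_succ, sum_range_succ',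
      ih (fun k => f (k + 1)), sum_Icc_succ_top (by omega)]
    have hpairs : ∑ j ∈ Icc 1 m, (f (m - j + 1) + f (m + j + 1))
        = ∑ j ∈ Icc 1 m, (f (m + 1 - j) + f (m + 1 + j)) :=
      sum_congr rfl fun j hj => by
        rw [show m - j + 1 = m + 1 - j by grind, show m + j + 1 = m + 1 + j by omega]
    rw [hpairs, Nat.sub_self, show m + 1 + (m + 1) = 2 * m + 1 + 1 by omega]
    abel

lemma Real.two_mul_sin_pow_two_mul_eq_sum (ℓ : ℕ) (θ : ℝ) :
    (2 * sin θ) ^ (2 * ℓ) = ∑ m ∈ range (2 * ℓ + 1),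
      (-1) ^ (ℓ + m) * ((2 * ℓ).choose m : ℝ) * cos (2 * (ℓ - m) * θ) := by
  have hsin : (2 * sin θ : ℂ) =
      (Complex.exp (-θ * Complex.I) - Complex.exp (θ * Complex.I)) * Complex.I := by
    rw [Complex.ofReal_sin, Complex.sin]; ring
  have hexp : ∀ m ≤ 2 * ℓ, Complex.exp (-θ * Complex.I) ^ m *
      Complex.exp (θ * Complex.I) ^ (2 * ℓ - m) =
        Complex.exp (2 * ((ℓ : ℂ) - m) * θ * Complex.I) := by
    intro m hm
    rw [← Complex.exp_nat_mul, ← Complex.exp_nat_mul, ← Complex.exp_add]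
    push_cast [Nat.cast_sub hm]
    ring_nf
  calc (2 * sin θ) ^ (2 * ℓ) = (((2 * sin θ) ^ (2 * ℓ) : ℝ) : ℂ).re := (Complex.ofReal_re _).symm
    _ = (∑ m ∈ range (2 * ℓ + 1), (((-1) ^ (ℓ + m) * ((2 * ℓ).choose m : ℝ) : ℝ) : ℂ) *
          Complex.exp (↑(2 * (ℓ - m) * θ) * Complex.I)).re := by
      rw [Complex.ofReal_pow, Complex.ofReal_mul, Complex.ofReal_ofNat, hsin, mul_pow, sub_pow,
        sum_mul]
      refine congrArg _ (sum_congr rfl fun m hm => ?_)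
      push_cast
      rw [← hexp m (by grind), pow_mul, Complex.I_sq, pow_add, pow_add, pow_mul]
      simp only [neg_one_sq, one_pow, mul_one]
      ring
    _ = _ := by simp only [Complex.re_sum, Complex.re_ofReal_mul, Complex.exp_ofReal_mul_I_re]

lemma Real.two_mul_sin_pow_two_mul (ℓ : ℕ) (θ : ℝ) :
    (2 * sin θ) ^ (2 * ℓ) = (2 * ℓ).choose ℓ +
      2 * ∑ j ∈ Icc 1 ℓ, (-1) ^ j * ((2 * ℓ).choose (ℓ - j) : ℝ) * cos (2 * j * θ) := by
  rw [Real.two_mul_sin_pow_two_mul_eq_sum, sum_range_two_mul_add_one_eq_add_sum_Icc, mul_sum]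
  congr 1
  · simp [← two_mul, pow_mul]
  refine sum_congr rfl fun j hj => ?_
  have hjℓ : j ≤ ℓ := (mem_Icc.mp hj).2
  rw [show ℓ + (ℓ - j) = j + 2 * (ℓ - j) by omega, show ℓ + (ℓ + j) = j + 2 * ℓ by omega,
    ← Nat.choose_symm_of_eq_add (show 2 * ℓ = ℓ + j + (ℓ - j) by omega)]
  push_cast [Nat.cast_sub hjℓ]
  simp only [pow_add, pow_mul, neg_one_sq, one_pow, mul_one]
  rw [show 2 * ((ℓ : ℝ) - (ℓ + j)) * θ = -(2 * j * θ) by ring, Real.cos_neg]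
  ring_nf

lemma MeasureTheory.setIntegral_eq_zero_of_odd {E F : Type*} [MeasurableSpace E]
    [InvolutiveNeg E] [MeasurableNeg E] {μ : Measure E} [μ.IsNegInvariant]
    [NormedAddCommGroup F] [NormedSpace ℝ F] {K : Set E} (hK : -K = K) {f : E → F}
    (hf : ∀ u, f (-u) = -f u) : ∫ u in K, f u ∂μ = 0 := by
  have h := (Measure.measurePreserving_neg μ).setIntegral_preimage_emb
    (MeasurableEquiv.neg E).measurableEmbedding f K
  rw [Set.neg_preimage, hK] at h
  simp only [hf, integral_neg] at h
  have h2 : (2 : ℝ) • ∫ u in K, f u ∂μ = 0 := by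
    rw [two_smul]; nth_rw 1 [← h]; exact neg_add_cancel _
  exact (smul_eq_zero.mp h2).resolve_left two_ne_zero

section

variable {n : ℕ} {K : Set (EuclideanSpace ℝ (Fin n))}

lemma FT_indK (hK : MeasurableSet K) (y : EuclideanSpace ℝ (Fin n)) :
    FT (indK K) y = ((volume K).toReal : ℂ)⁻¹ *
      ∫ u in K, Complex.exp (-(Complex.I * ((inner ℝ u y : ℝ) : ℂ))) := by
  unfold FT indK
  rw [← integral_const_mul, ← integral_indicator hK]
  congr 1 with u
  by_cases hu : u ∈ K <;> simp [hu, mul_comm]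

lemma FT_indK_of_neg_eq (hK : IsCompact K) (hsym : -K = K) (y : EuclideanSpace ℝ (Fin n)) :
    FT (indK K) y = (((volume K).toReal⁻¹ * ∫ u in K, cos (inner ℝ u y)) : ℝ) := by
  have hodd : ∫ u in K, (Complex.exp (-(Complex.I * ((inner ℝ u y : ℝ) : ℂ))) -
      (cos (inner ℝ u y) : ℂ)) = 0 := by
    refine setIntegral_eq_zero_of_odd hsym fun u => ?_
    simp only [inner_neg_left, Real.cos_neg, Complex.ofReal_cos, Complex.cos]
    push_cast
    ring_nf
  have hint : ∀ g : EuclideanSpace ℝ (Fin n) → ℂ, Continuous g → IntegrableOn g K :=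
    fun g hg => hg.continuousOn.integrableOn_compact hK
  rw [integral_sub (hint _ (by fun_prop)) (hint _ (by fun_prop)), sub_eq_zero] at hodd
  rw [FT_indK hK.measurableSet, hodd, integral_complex_ofReal]
  push_cast
  rfl

lemma AK_eq_integral_two_mul_sin_pow (ℓ : ℕ) (x : EuclideanSpace ℝ (Fin n)) :
    AK ℓ K x = ((2 * ℓ).choose ℓ : ℝ)⁻¹ * (volume K).toReal⁻¹ *
      ∫ u in K, (2 * sin (inner ℝ x u / 2)) ^ (2 * ℓ) := by
  simp_rw [AK, mul_pow, integral_const_mul, pow_mul (2 : ℝ)]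
  ring

lemma setIntegral_two_mul_sin_pow (hK : IsCompact K) (ℓ : ℕ) (x : EuclideanSpace ℝ (Fin n)) :
    ∫ u in K, (2 * sin (inner ℝ x u / 2)) ^ (2 * ℓ) =
      (2 * ℓ).choose ℓ * (volume K).toReal + 2 * ∑ j ∈ Icc 1 ℓ,
        (-1) ^ j * ((2 * ℓ).choose (ℓ - j) : ℝ) * ∫ u in K, cos (inner ℝ u ((j : ℝ) • x)) := by
  have hint : ∀ g : EuclideanSpace ℝ (Fin n) → ℝ, Continuous g → IntegrableOn g K :=
    fun g hg => hg.continuousOn.integrableOn_compact hK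
  have hcos : ∀ (j : ℕ) (u : EuclideanSpace ℝ (Fin n)),
      cos (2 * j * (inner ℝ x u / 2)) = cos (inner ℝ u ((j : ℝ) • x)) := by
    intro j u
    rw [real_inner_smul_right, real_inner_comm]
    ring_nf
  simp_rw [Real.two_mul_sin_pow_two_mul, hcos]
  rw [integral_add (hint _ continuous_const) (hint _ (by fun_prop)), setIntegral_const,
    integral_const_mul, integral_finsetSum _ fun j _ => hint _ (by fun_prop)]
  simp_rw [integral_const_mul]
  simp [Measure.real, mul_comm]

lemma mK_eq_one_sub_AK (hK : IsCompact K) (hsym : -K = K) (hvol : volume K ≠ 0) (ℓ : ℕ)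
    (x : EuclideanSpace ℝ (Fin n)) : mK ℓ K x = 1 - AK ℓ K x := by
  have hv : ((volume K).toReal : ℂ) ≠ 0 :=
    Complex.ofReal_ne_zero.mpr (ENNReal.toReal_ne_zero.mpr ⟨hvol, hK.measure_lt_top.ne⟩)
  have hC : ((2 * ℓ).choose ℓ : ℂ) ≠ 0 := Nat.cast_ne_zero.mpr (Nat.choose_pos (by omega)).ne'
  have hsum : ∑ j ∈ Icc 1 ℓ, (-1 : ℂ) ^ j * ((2 * ℓ).choose (ℓ - j) : ℂ) * FT (indK K) ((j : ℝ) • x)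
      = ((volume K).toReal : ℂ)⁻¹ * ∑ j ∈ Icc 1 ℓ, (-1 : ℂ) ^ j * ((2 * ℓ).choose (ℓ - j) : ℂ) *
          ((∫ u in K, cos (inner ℝ u ((j : ℝ) • x)) : ℝ) : ℂ) := by
    rw [mul_sum]
    refine sum_congr rfl fun j _ => ?_
    rw [FT_indK_of_neg_eq hK hsym]
    push_cast
    ring
  rw [mK, hsum, AK_eq_integral_two_mul_sin_pow, setIntegral_two_mul_sin_pow hK]
  push_cast
  field_simp
  ring

lemma Real.abs_two_mul_sin_half_le (t : ℝ) : |2 * sin (t / 2)| ≤ |t| := by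
  have h := Real.abs_sin_le_abs (x := t / 2)
  rw [abs_div, abs_two] at h
  rw [abs_mul, abs_two]
  linarith

lemma AK_nonneg (ℓ : ℕ) (x : EuclideanSpace ℝ (Fin n)) : 0 ≤ AK ℓ K x := by
  rw [AK_eq_integral_two_mul_sin_pow]
  exact mul_nonneg (by positivity)
    (integral_nonneg fun u => (even_two_mul ℓ).pow_nonneg _)

lemma AK_le {R : ℝ} (hKR : K ⊆ closedBall 0 R) (ℓ : ℕ) (x : EuclideanSpace ℝ (Fin n)) :
    AK ℓ K x ≤ R ^ (2 * ℓ) / (2 * ℓ).choose ℓ * ‖x‖ ^ (2 * ℓ) := by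
  have hbound : ∀ u ∈ K, ‖(2 * sin (inner ℝ x u / 2)) ^ (2 * ℓ)‖ ≤ (R * ‖x‖) ^ (2 * ℓ) := by
    intro u hu
    rw [norm_pow, Real.norm_eq_abs]
    refine pow_le_pow_left₀ (abs_nonneg _) ?_ _
    calc |2 * sin (inner ℝ x u / 2)| ≤ |inner ℝ x u| := Real.abs_two_mul_sin_half_le _
      _ ≤ ‖x‖ * ‖u‖ := abs_real_inner_le_norm x u
      _ ≤ R * ‖x‖ := by rw [mul_comm]; gcongr; simpa using hKR hu
  have hint := norm_setIntegral_le_of_norm_le_const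
    ((measure_mono (μ := volume) hKR).trans_lt measure_closedBall_lt_top) hbound
  have hv : (volume K).toReal⁻¹ * (volume K).toReal ≤ 1 :=
    inv_mul_le_one_of_le₀ le_rfl ENNReal.toReal_nonneg
  rw [AK_eq_integral_two_mul_sin_pow, mul_assoc, div_mul_eq_mul_div, div_eq_inv_mul, ← mul_pow]
  gcongr
  calc (volume K).toReal⁻¹ * ∫ u in K, (2 * sin (inner ℝ x u / 2)) ^ (2 * ℓ)
      ≤ (volume K).toReal⁻¹ * ((R * ‖x‖) ^ (2 * ℓ) * (volume K).toReal) := by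
        gcongr; exact (Real.le_norm_self _).trans hint
    _ ≤ (R * ‖x‖) ^ (2 * ℓ) := by nlinarith [(even_two_mul ℓ).pow_nonneg (R * ‖x‖)]

lemma real_inner_ge_of_mem_ball {E : Type*} [NormedAddCommGroup E] [InnerProductSpace ℝ E]
    {x c u : E} {ρ : ℝ} (hu : u ∈ ball c ρ) : inner ℝ x c - ‖x‖ * ρ ≤ inner ℝ x u := by
  have h : |inner ℝ x (u - c)| ≤ ‖x‖ * ρ :=
    (abs_real_inner_le_norm x _).trans (by gcongr; exact (mem_ball_iff_norm.mp hu).le)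
  rw [inner_sub_right] at h
  linarith [neg_abs_le (inner ℝ x u - inner ℝ x c)]

lemma setIntegral_two_mul_sin_pow_ge (hK : IsCompact K) {r : ℝ} (hr0 : 0 < r) (hr : r ≤ 1 / 2)
    (hrK : ball 0 r ⊆ K) (ℓ : ℕ) {x : EuclideanSpace ℝ (Fin n)} (hx0 : x ≠ 0) (hx : ‖x‖ ≤ 4) :
    volume.real (ball (0 : EuclideanSpace ℝ (Fin n)) (r / 4)) * (r / (2 * π) * ‖x‖) ^ (2 * ℓ) ≤
      ∫ u in K, (2 * sin (inner ℝ x u / 2)) ^ (2 * ℓ) := by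
  have hxpos : 0 < ‖x‖ := norm_pos_iff.mpr hx0
  set B := ball ((r / (2 * ‖x‖)) • x) (r / 4)
  have hB : ∀ u ∈ B, r / 4 * ‖x‖ ≤ inner ℝ x u ∧ ‖u‖ < r := by
    intro u hu
    have hc : inner ℝ x ((r / (2 * ‖x‖)) • x) = r / 2 * ‖x‖ := by
      rw [real_inner_smul_right, real_inner_self_eq_norm_sq]; field_simp
    have hcn : ‖(r / (2 * ‖x‖)) • x‖ = r / 2 := by
      rw [norm_smul, Real.norm_of_nonneg (by positivity)]; field_simp
    constructor
    · linarith [real_inner_ge_of_mem_ball (x := x) hu]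
    · linarith [norm_lt_of_mem_ball hu]
  have hBK : B ⊆ K := fun u hu => hrK (mem_ball_zero_iff.mpr (hB u hu).2)
  have hpt : ∀ u ∈ B, (r / (2 * π) * ‖x‖) ^ (2 * ℓ) ≤ (2 * sin (inner ℝ x u / 2)) ^ (2 * ℓ) := by
    intro u hu
    obtain ⟨hlow, hnorm⟩ := hB u hu
    have hup : inner ℝ x u ≤ π := by
      nlinarith [real_inner_le_norm x u, Real.pi_gt_three, norm_nonneg u]
    have hjordan := Real.mul_le_sin (x := inner ℝ x u / 2) (by nlinarith) (by linarith)
    refine pow_le_pow_left₀ (by positivity) ?_ _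
    calc r / (2 * π) * ‖x‖ = 2 * (2 / π * (r / 4 * ‖x‖ / 2)) := by ring
      _ ≤ 2 * (2 / π * (inner ℝ x u / 2)) := by gcongr
      _ ≤ 2 * sin (inner ℝ x u / 2) := by gcongr
  have hint : IntegrableOn (fun u => (2 * sin (inner ℝ x u / 2)) ^ (2 * ℓ)) K :=
    (by fun_prop : Continuous _).continuousOn.integrableOn_compact hK
  calc volume.real (ball (0 : EuclideanSpace ℝ (Fin n)) (r / 4)) * (r / (2 * π) * ‖x‖) ^ (2 * ℓ)
      = (r / (2 * π) * ‖x‖) ^ (2 * ℓ) * volume.real B := by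
        rw [mul_comm]; simp only [B, Measure.real, Measure.addHaar_ball_center]
    _ ≤ ∫ u in B, (2 * sin (inner ℝ x u / 2)) ^ (2 * ℓ) :=
      setIntegral_ge_of_const_le_real measurableSet_ball measure_ball_lt_top.ne hpt
        (hint.mono_set hBK)
    _ ≤ ∫ u in K, (2 * sin (inner ℝ x u / 2)) ^ (2 * ℓ) :=
      setIntegral_mono_set hint (.of_forall fun u => (even_two_mul ℓ).pow_nonneg _)
        (.of_forall hBK)

lemma le_AK (hK : IsCompact K) {r R : ℝ} (hr0 : 0 < r) (hr : r ≤ 1 / 2) (hrK : ball 0 r ⊆ K)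
    (hKR : K ⊆ ball 0 R) {ℓ : ℕ} (hℓ : ℓ ≠ 0) {x : EuclideanSpace ℝ (Fin n)} (hx : ‖x‖ ≤ 4) :
    volume.real (ball (0 : EuclideanSpace ℝ (Fin n)) (r / 4)) /
        volume.real (ball (0 : EuclideanSpace ℝ (Fin n)) R) * (r / (2 * π)) ^ (2 * ℓ) /
          (2 * ℓ).choose ℓ * ‖x‖ ^ (2 * ℓ) ≤ AK ℓ K x := by
  rcases eq_or_ne x 0 with rfl | hx0
  · rw [norm_zero, zero_pow (by omega), mul_zero]
    exact AK_nonneg ℓ 0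
  have hvK : 0 < (volume K).toReal := ENNReal.toReal_pos
    ((measure_ball_pos volume 0 hr0).trans_le (measure_mono hrK)).ne' hK.measure_lt_top.ne
  have hvR : (volume K).toReal ≤ volume.real (ball (0 : EuclideanSpace ℝ (Fin n)) R) :=
    measureReal_mono hKR measure_ball_lt_top.ne
  rw [AK_eq_integral_two_mul_sin_pow]
  calc _ = ((2 * ℓ).choose ℓ : ℝ)⁻¹ * (volume.real (ball (0 : EuclideanSpace ℝ (Fin n)) R))⁻¹ *
        (volume.real (ball (0 : EuclideanSpace ℝ (Fin n)) (r / 4)) *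
          (r / (2 * π) * ‖x‖) ^ (2 * ℓ)) := by ring
    _ ≤ _ := by
      gcongr
      exact setIntegral_two_mul_sin_pow_ge hK hr0 hr hrK ℓ hx0 hx

end

theorem stmt19_general (n : ℕ) (ℓ : ℕ) (hℓ : 0 < ℓ)
    (δ₁ δ₂ : ℝ) (hδ₁ : 0 < δ₁) (hδ : δ₁ ≤ δ₂) :
    (∀ K : Set (EuclideanSpace ℝ (Fin n)), IsCompact K → Convex ℝ K → -K = K →
        ball (0 : EuclideanSpace ℝ (Fin n)) δ₁ ⊆ K →
        K ⊆ ball (0 : EuclideanSpace ℝ (Fin n)) δ₂ →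
      ∀ x : EuclideanSpace ℝ (Fin n), mK ℓ K x = 1 - ((AK ℓ K x : ℝ) : ℂ)) ∧
    ∃ C₁ C₂ : ℝ, 0 < C₁ ∧ 0 < C₂ ∧
      ∀ K : Set (EuclideanSpace ℝ (Fin n)), IsCompact K → Convex ℝ K → -K = K →
        ball (0 : EuclideanSpace ℝ (Fin n)) δ₁ ⊆ K →
        K ⊆ ball (0 : EuclideanSpace ℝ (Fin n)) δ₂ →
      ∀ x : EuclideanSpace ℝ (Fin n), ‖x‖ ≤ 4 →
        C₁ * ‖x‖ ^ (2 * ℓ) ≤ AK ℓ K x ∧ AK ℓ K x ≤ C₂ * ‖x‖ ^ (2 * ℓ) := by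
  have hball : ∀ ρ : ℝ, 0 < ρ → 0 < volume.real (ball (0 : EuclideanSpace ℝ (Fin n)) ρ) :=
    fun ρ hρ => ENNReal.toReal_pos (measure_ball_pos volume 0 hρ).ne' measure_ball_lt_top.ne
  refine ⟨fun K hK _ hsym hδ₁K _ x => mK_eq_one_sub_AK hK hsym
    ((measure_ball_pos volume 0 hδ₁).trans_le (measure_mono hδ₁K)).ne' ℓ x, ?_⟩
  set r := min δ₁ (1 / 2)
  have hr0 : 0 < r := lt_min hδ₁ one_half_pos
  have hδ₂ : 0 < δ₂ := hδ₁.trans_le hδ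
  have hC : 0 < ((2 * ℓ).choose ℓ : ℝ) := Nat.cast_pos.mpr (Nat.choose_pos (by omega))
  refine ⟨volume.real (ball (0 : EuclideanSpace ℝ (Fin n)) (r / 4)) /
      volume.real (ball (0 : EuclideanSpace ℝ (Fin n)) δ₂) * (r / (2 * π)) ^ (2 * ℓ) /
        (2 * ℓ).choose ℓ, δ₂ ^ (2 * ℓ) / (2 * ℓ).choose ℓ, ?_, by positivity, ?_⟩
  · have := hball _ (div_pos hr0 four_pos)
    have := hball _ hδ₂
    positivity
  intro K hK _ _ hδ₁K hKδ₂ x hx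
  exact ⟨le_AK hK hr0 (min_le_right _ _) ((ball_subset_ball (min_le_left _ _)).trans hδ₁K) hKδ₂
    hℓ.ne' hx, AK_le (hKδ₂.trans ball_subset_closedBall) ℓ x⟩

/-- Let `n ≥ 1`, `ℓ ≥ 1`, `0 < δ₁ ≤ δ₂`.  For every compact symmetric convex set `K`
with `B(0,δ₁) ⊆ K ⊆ B(0,δ₂)` one has `m_{ℓ,K}(x) = 1 - A_{ℓ,K}(x)` for all `x`, and
there are positive constants `C₁, C₂` depending only on `n, ℓ, δ₁, δ₂` such that
`C₁ |x|^{2ℓ} ≤ A_{ℓ,K}(x) ≤ C₂ |x|^{2ℓ}` whenever `|x| ≤ 4`. -/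
theorem stmt19 (n : ℕ) (hn : 1 ≤ n) (ℓ : ℕ) (hℓ : 0 < ℓ)
    (δ₁ δ₂ : ℝ) (hδ₁ : 0 < δ₁) (hδ : δ₁ ≤ δ₂) :
    (∀ K : Set (EuclideanSpace ℝ (Fin n)), IsCompact K → Convex ℝ K → -K = K →
        ball (0 : EuclideanSpace ℝ (Fin n)) δ₁ ⊆ K →
        K ⊆ ball (0 : EuclideanSpace ℝ (Fin n)) δ₂ →
      ∀ x : EuclideanSpace ℝ (Fin n), mK ℓ K x = 1 - ((AK ℓ K x : ℝ) : ℂ)) ∧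
    ∃ C₁ C₂ : ℝ, 0 < C₁ ∧ 0 < C₂ ∧
      ∀ K : Set (EuclideanSpace ℝ (Fin n)), IsCompact K → Convex ℝ K → -K = K →
        ball (0 : EuclideanSpace ℝ (Fin n)) δ₁ ⊆ K →
        K ⊆ ball (0 : EuclideanSpace ℝ (Fin n)) δ₂ →
      ∀ x : EuclideanSpace ℝ (Fin n), ‖x‖ ≤ 4 →
        C₁ * ‖x‖ ^ (2 * ℓ) ≤ AK ℓ K x ∧ AK ℓ K x ≤ C₂ * ‖x‖ ^ (2 * ℓ) :=
  stmt19_general n ℓ hℓ δ₁ δ₂ hδ₁ hδ
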